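/- The generating function identity: in (ℤ[T])[[u]], Σ_{n≥0} L_n(T) u^n = (1 - Σ_{k≥1} ε_{k-1}(T) (uT²)^k)^{-1}, where L_n(T) = T^(2n) L̃_n(T). -/

import Mathlib

open Polynomial Finset

noncomputable def eps (k : ℕ) : Polynomial ℤ :=
  ∏ i ∈ Finset.range k, (1 + X ^ (2 * i + 1))

/-! The recurrence for `L̃` says exactly that `(1 - u · Σ ε_k uᵏ) · Σ L̃_n uⁿ = 1`, by comparing
coefficients. Substituting `u ↦ uT²` (a ring endomorphism of `ℤ[T][[u]]`) turns this into the
identity for `L_n = T^(2n) L̃_n`. -/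

namespace PowerSeries

variable {R : Type*} [CommRing R]

theorem one_sub_X_mul_mk_mul_mk_eq_one {a L : ℕ → R} (h0 : L 0 = 1)
    (hL : ∀ n, L (n + 1) = ∑ k ∈ range (n + 1), a (n - k) * L k) :
    (1 - X * mk a) * mk L = 1 := by
  ext (_ | n)
  · simp [h0]
  · rw [sub_mul, one_mul, mul_assoc, mul_comm (mk a), map_sub, coeff_mk, coeff_succ_X_mul,
      coeff_mul, Finset.Nat.sum_antidiagonal_eq_sum_range_succ_mk, hL]
    simp [mul_comm]

theorem rescale_one_sub_X_mul_mk (c : R) (a : ℕ → R) :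
    rescale c (1 - X * mk a) = mk fun k => if k = 0 then 1 else -(a (k - 1) * c ^ k) := by
  ext (_ | k)
  · simp
  · rw [map_sub, map_one, map_mul, rescale_X, rescale_mk, mul_assoc, map_sub, coeff_C_mul,
      coeff_succ_X_mul]
    simp only [coeff_mk, coeff_one, if_neg k.succ_ne_zero, Nat.add_sub_cancel]
    ring

end PowerSeries

/-- with `L_n(T) = T^(2n) L̃_n(T)`, in `(ℤ[T])[[u]]` one has
`Σ_{n≥0} L_n(T) uⁿ = (1 - Σ_{k≥1} ε_{k-1}(T) (uT²)^k)⁻¹`, stated as the product identity. -/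
theorem stmt_14 (L : ℕ → Polynomial ℤ) (hL0 : L 0 = 1)
    (hL : ∀ n : ℕ, 1 ≤ n → L n = ∑ k ∈ Finset.range n, eps (n - 1 - k) * L k) :
    (PowerSeries.mk fun k => if k = 0 then 1 else -(eps (k - 1) * X ^ (2 * k))) *
      (PowerSeries.mk fun n => X ^ (2 * n) * L n) = 1 := by
  have hrec : (1 - PowerSeries.X * PowerSeries.mk eps) * PowerSeries.mk L = 1 :=
    PowerSeries.one_sub_X_mul_mk_mul_mk_eq_one hL0 fun n => by simpa using hL (n + 1) (by omega)
  have hsubst := congrArg (PowerSeries.rescale (X ^ 2 : ℤ[X])) hrec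
  rw [map_mul, map_one, PowerSeries.rescale_one_sub_X_mul_mk, PowerSeries.rescale_mk] at hsubst
  simpa only [← pow_mul] using hsubst
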